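/- arXiv:2002.00219 — 3 statements merged into one kernel-verified Lean document; each statement's English description precedes it below -/
import Mathlib

section
/- Let n, d, k ≥ 1 be integers and denote by Bⁿ ⊆ ℝⁿ and B^d ⊆ ℝ^d the open unit balls. Let V₁, …, V_k : Bⁿ × B^d → ℂⁿ × ℂ^d be smooth (C^∞) maps such that for every point p ∈ Bⁿ × B^d the vectors V₁(p), …, V_k(p) are linearly independent over ℂ; write E_p := span_ℂ{V₁(p), …, V_k(p)} ⊆ ℂⁿ × ℂ^d. Let P : ℂⁿ × ℂ^d → ℂⁿ be the projection onto the first factor. Assume: (i) for every p, the restriction of P to E_p is injective; and (ii) for every z ∈ Bⁿ, the subspace F_z := P(E_{(z,w)}) ⊆ ℂⁿ does not depend on w ∈ B^d. Then for every smooth map W : Bⁿ → ℂⁿ satisfying W(z) ∈ F_z for all z ∈ Bⁿ, there exists a smooth map V : Bⁿ × B^d → ℂⁿ × ℂ^d such that V(z,w) ∈ E_{(z,w)} and P(V(z,w)) = W(z) for all (z,w) ∈ Bⁿ × B^d. -/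
/-!
Since `P` is injective on each `E p`, the projected frame `P ∘ V i` is still pointwise
independent, and `W` lies in its span. The coefficients of `W` in that frame solve the normal
equations whose matrix is the Gram matrix of the projected frame; it is invertible and depends
smoothly on the point, so Cramer's rule makes the coefficients smooth. The same coefficients
applied to the frame `V i` give the lift.
-/

open Metric Set Submodule Matrix

theorem ContDiffOn.matrix_det {𝕜 X R ι : Type*} [NontriviallyNormedField 𝕜]
    [NormedAddCommGroup X] [NormedSpace 𝕜 X] [NormedCommRing R] [NormedAlgebra 𝕜 R]
    [Fintype ι] [DecidableEq ι] {s : Set X} {n : WithTop ℕ∞} {M : X → Matrix ι ι R}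
    (hM : ∀ i j, ContDiffOn 𝕜 n (fun x => M x i j) s) :
    ContDiffOn 𝕜 n (fun x => (M x).det) s := by
  simp only [det_apply, Units.smul_def, zsmul_eq_mul]
  exact ContDiffOn.sum fun σ _ => contDiffOn_const.mul (contDiffOn_prod fun i _ => hM _ _)

section Gram

variable {𝕜 F ι : Type*} [RCLike 𝕜] [NormedAddCommGroup F] [InnerProductSpace 𝕜 F]
  [Fintype ι]

theorem Matrix.sum_smul_eq_of_gram_mulVec_eq {v : ι → F} {w : F} {c : ι → 𝕜}
    (hw : w ∈ span 𝕜 (range v)) (hc : gram 𝕜 v *ᵥ c = fun i => inner 𝕜 (v i) w) :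
    ∑ i, c i • v i = w := by
  set u := w - ∑ i, c i • v i
  have hu_orth : span 𝕜 (range v) ≤ (𝕜 ∙ u)ᗮ := by
    refine span_le.2 (range_subset_iff.2 fun i => ?_)
    rw [SetLike.mem_coe, mem_orthogonal_singleton_iff_inner_left, inner_sub_right, inner_sum,
      sub_eq_zero, ← congr_fun hc i]
    simp only [inner_smul_right, mulVec, dotProduct, gram_apply, mul_comm]
  have hu_mem : u ∈ span 𝕜 (range v) :=
    sub_mem hw (sum_mem fun i _ => smul_mem _ _ (subset_span ⟨i, rfl⟩))
  have hu : u = 0 :=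
    inner_self_eq_zero.1 (mem_orthogonal_singleton_iff_inner_left.1 (hu_orth hu_mem))
  exact (sub_eq_zero.1 hu).symm

variable {X : Type*} [NormedAddCommGroup X] [NormedSpace ℝ X] [NormedSpace ℝ F]
  {s : Set X} {n : WithTop ℕ∞}

theorem exists_contDiffOn_coeffs_of_mem_span {v : ι → X → F} {w : X → F}
    (hv : ∀ i, ContDiffOn ℝ n (v i) s) (hw : ContDiffOn ℝ n w s)
    (hind : ∀ x ∈ s, LinearIndependent 𝕜 fun i => v i x)
    (hspan : ∀ x ∈ s, w x ∈ span 𝕜 (range fun i => v i x)) :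
    ∃ c : X → ι → 𝕜, (∀ i, ContDiffOn ℝ n (fun x => c x i) s) ∧
      ∀ x ∈ s, ∑ i, c x i • v i x = w x := by
  classical
  set G : X → Matrix ι ι 𝕜 := fun x => gram 𝕜 fun i => v i x
  set b : X → ι → 𝕜 := fun x i => inner 𝕜 (v i x) (w x)
  have hdet : ∀ x ∈ s, (G x).det ≠ 0 := fun x hx =>
    det_gram_ne_zero_iff_linearIndependent.2 (hind x hx)
  have hG : ∀ i j, ContDiffOn ℝ n (fun x => G x i j) s := fun i j =>
    (hv i).inner 𝕜 (hv j)
  have hb : ∀ i, ContDiffOn ℝ n (fun x => b x i) s := fun i => (hv i).inner 𝕜 hw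
  -- Cramer's rule for the normal equations `G c = b`.
  refine ⟨fun x => (G x).det⁻¹ • cramer (G x) (b x), fun i => ?_, fun x hx => ?_⟩
  · refine ((ContDiffOn.matrix_det hG).inv hdet).mul (ContDiffOn.matrix_det fun j l => ?_)
    simp only [updateCol_apply]
    split_ifs
    exacts [hb j, hG j l]
  · refine sum_smul_eq_of_gram_mulVec_eq (hspan x hx) ?_
    rw [mulVec_smul, mulVec_cramer, smul_smul, inv_mul_cancel₀ (hdet x hx), one_smul]

end Gram

section Lift

variable {𝕜 X M F ι : Type*} [RCLike 𝕜] [NormedAddCommGroup X] [NormedSpace ℝ X]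
  [NormedAddCommGroup M] [NormedSpace 𝕜 M] [NormedSpace ℝ M] [IsScalarTower ℝ 𝕜 M]
  [NormedAddCommGroup F] [InnerProductSpace 𝕜 F] [NormedSpace ℝ F] [IsScalarTower ℝ 𝕜 F]
  [Fintype ι] {s : Set X} {n : WithTop ℕ∞}

theorem exists_contDiffOn_lift_of_injOn {V : ι → X → M} (P : M →L[𝕜] F) {W : X → F}
    (hV : ∀ i, ContDiffOn ℝ n (V i) s) (hW : ContDiffOn ℝ n W s)
    (hind : ∀ x ∈ s, LinearIndependent 𝕜 fun i => V i x)
    (hinj : ∀ x ∈ s, InjOn P (span 𝕜 (range fun i => V i x)))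
    (hWmem : ∀ x ∈ s, W x ∈ (span 𝕜 (range fun i => V i x)).map (P : M →ₗ[𝕜] F)) :
    ∃ U : X → M, ContDiffOn ℝ n U s ∧
      ∀ x ∈ s, U x ∈ span 𝕜 (range fun i => V i x) ∧ P (U x) = W x := by
  have hPV : ∀ i, ContDiffOn ℝ n (fun x => P (V i x)) s := fun i =>
    (P.restrictScalars ℝ).contDiff.comp_contDiffOn (hV i)
  obtain ⟨c, hc, hcW⟩ := exists_contDiffOn_coeffs_of_mem_span hPV hW
    (fun x hx => (hind x hx).map_injOn (P : M →ₗ[𝕜] F) (hinj x hx))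
    (fun x hx => by simpa only [map_span, ← range_comp, ContinuousLinearMap.coe_coe, Function.comp_def] using hWmem x hx)
  refine ⟨fun x => ∑ i, c x i • V i x, ContDiffOn.sum fun i _ => (hc i).smul (hV i),
    fun x hx => ⟨sum_mem fun i _ => smul_mem _ _ (subset_span ⟨i, rfl⟩), ?_⟩⟩
  simpa only [map_sum, map_smul] using hcW x hx

end Lift

theorem related_sections_local_general
    {n d k : ℕ}
    (V : Fin k → (EuclideanSpace ℝ (Fin n) × EuclideanSpace ℝ (Fin d)) →
      (EuclideanSpace ℂ (Fin n) × EuclideanSpace ℂ (Fin d)))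
    (E : (EuclideanSpace ℝ (Fin n) × EuclideanSpace ℝ (Fin d)) →
      Submodule ℂ (EuclideanSpace ℂ (Fin n) × EuclideanSpace ℂ (Fin d)))
    (hE : ∀ p, E p = Submodule.span ℂ (Set.range fun i => V i p))
    (P : (EuclideanSpace ℂ (Fin n) × EuclideanSpace ℂ (Fin d)) →ₗ[ℂ] EuclideanSpace ℂ (Fin n))
    (hsmooth : ∀ i, ContDiffOn ℝ (⊤ : ℕ∞) (V i)
      (ball (0 : EuclideanSpace ℝ (Fin n)) 1 ×ˢ ball (0 : EuclideanSpace ℝ (Fin d)) 1))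
    (hindep : ∀ p ∈ ball (0 : EuclideanSpace ℝ (Fin n)) 1 ×ˢ ball (0 : EuclideanSpace ℝ (Fin d)) 1,
      LinearIndependent ℂ fun i => V i p)
    (hPinj : ∀ p ∈ ball (0 : EuclideanSpace ℝ (Fin n)) 1 ×ˢ ball (0 : EuclideanSpace ℝ (Fin d)) 1,
      Set.InjOn P (E p))
    (W : EuclideanSpace ℝ (Fin n) → EuclideanSpace ℂ (Fin n))
    (hW : ContDiffOn ℝ (⊤ : ℕ∞) W (ball (0 : EuclideanSpace ℝ (Fin n)) 1))
    (hWF : ∀ z ∈ ball (0 : EuclideanSpace ℝ (Fin n)) 1,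
      ∀ w ∈ ball (0 : EuclideanSpace ℝ (Fin d)) 1, W z ∈ (E (z, w)).map P) :
    ∃ Vsec : (EuclideanSpace ℝ (Fin n) × EuclideanSpace ℝ (Fin d)) →
        (EuclideanSpace ℂ (Fin n) × EuclideanSpace ℂ (Fin d)),
      ContDiffOn ℝ (⊤ : ℕ∞) Vsec
        (ball (0 : EuclideanSpace ℝ (Fin n)) 1 ×ˢ ball (0 : EuclideanSpace ℝ (Fin d)) 1) ∧
      ∀ p ∈ ball (0 : EuclideanSpace ℝ (Fin n)) 1 ×ˢ ball (0 : EuclideanSpace ℝ (Fin d)) 1,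
        Vsec p ∈ E p ∧ P (Vsec p) = W p.1 := by
  obtain rfl : E = fun p => span ℂ (range fun i => V i p) := funext hE
  exact exists_contDiffOn_lift_of_injOn (LinearMap.toContinuousLinearMap P) hsmooth
    (hW.comp contDiffOn_fst fun p hp => hp.1) hindep hPinj fun p hp => hWF p.1 hp.1 p.2 hp.2

/-- Local coordinate form of the related-sections lemma: given smooth maps
`V₁, …, V_k : Bⁿ × B^d → ℂⁿ × ℂ^d` which are pointwise linearly independent over ℂ,
spanning subspaces `E_p` on which the projection `P` onto the first factor is injective
and such that `F_z := P(E_(z,w))` does not depend on `w`, every smooth map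
`W : Bⁿ → ℂⁿ` with `W z ∈ F_z` lifts to a smooth map `V` with values in `E` and
`P ∘ V = W ∘ pr₁`. -/
theorem related_sections_local
    {n d k : ℕ} (hn : 1 ≤ n) (hd : 1 ≤ d) (hk : 1 ≤ k)
    (V : Fin k → (EuclideanSpace ℝ (Fin n) × EuclideanSpace ℝ (Fin d)) →
      (EuclideanSpace ℂ (Fin n) × EuclideanSpace ℂ (Fin d)))
    (E : (EuclideanSpace ℝ (Fin n) × EuclideanSpace ℝ (Fin d)) →
      Submodule ℂ (EuclideanSpace ℂ (Fin n) × EuclideanSpace ℂ (Fin d)))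
    (hE : ∀ p, E p = Submodule.span ℂ (Set.range fun i => V i p))
    (P : (EuclideanSpace ℂ (Fin n) × EuclideanSpace ℂ (Fin d)) →ₗ[ℂ] EuclideanSpace ℂ (Fin n))
    (hP : P = LinearMap.fst ℂ (EuclideanSpace ℂ (Fin n)) (EuclideanSpace ℂ (Fin d)))
    (hsmooth : ∀ i, ContDiffOn ℝ (⊤ : ℕ∞) (V i)
      (ball (0 : EuclideanSpace ℝ (Fin n)) 1 ×ˢ ball (0 : EuclideanSpace ℝ (Fin d)) 1))
    (hindep : ∀ p ∈ ball (0 : EuclideanSpace ℝ (Fin n)) 1 ×ˢ ball (0 : EuclideanSpace ℝ (Fin d)) 1,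
      LinearIndependent ℂ fun i => V i p)
    (hPinj : ∀ p ∈ ball (0 : EuclideanSpace ℝ (Fin n)) 1 ×ˢ ball (0 : EuclideanSpace ℝ (Fin d)) 1,
      Set.InjOn P (E p))
    (hFconst : ∀ z ∈ ball (0 : EuclideanSpace ℝ (Fin n)) 1,
      ∀ w ∈ ball (0 : EuclideanSpace ℝ (Fin d)) 1, ∀ w' ∈ ball (0 : EuclideanSpace ℝ (Fin d)) 1,
        (E (z, w)).map P = (E (z, w')).map P)
    (W : EuclideanSpace ℝ (Fin n) → EuclideanSpace ℂ (Fin n))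
    (hW : ContDiffOn ℝ (⊤ : ℕ∞) W (ball (0 : EuclideanSpace ℝ (Fin n)) 1))
    (hWF : ∀ z ∈ ball (0 : EuclideanSpace ℝ (Fin n)) 1,
      ∀ w ∈ ball (0 : EuclideanSpace ℝ (Fin d)) 1, W z ∈ (E (z, w)).map P) :
    ∃ Vsec : (EuclideanSpace ℝ (Fin n) × EuclideanSpace ℝ (Fin d)) →
        (EuclideanSpace ℂ (Fin n) × EuclideanSpace ℂ (Fin d)),
      ContDiffOn ℝ (⊤ : ℕ∞) Vsec
        (ball (0 : EuclideanSpace ℝ (Fin n)) 1 ×ˢ ball (0 : EuclideanSpace ℝ (Fin d)) 1) ∧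
      ∀ p ∈ ball (0 : EuclideanSpace ℝ (Fin n)) 1 ×ˢ ball (0 : EuclideanSpace ℝ (Fin d)) 1,
        Vsec p ∈ E p ∧ P (Vsec p) = W p.1 :=
  related_sections_local_general V E hE P hsmooth hindep hPinj W hW hWF
end

section
/- Let V be a complex normed vector space, S ⊆ ℂⁿ an open set, and φ : S → V a holomorphic map (differentiable over ℂ) which is injective, nowhere vanishing, and whose derivative d_sφ : ℂⁿ → V is injective at every s ∈ S. Fix integers m ≥ 0 and l ≥ 1 and define Φ : ℂˣ × S → V × V by Φ(c, s) := (c^{ml} · φ(s), c^{(m+1)l} · φ(s)). Then: (1) Φ is holomorphic on the open set ℂˣ × S ⊆ ℂ × ℂⁿ and its derivative at every point of ℂˣ × S is injective (Φ is a holomorphic immersion); (2) for (c, s), (c′, s′) ∈ ℂˣ × S one has Φ(c, s) = Φ(c′, s′) if and only if s = s′ and c^l = (c′)^l. In particular, when l = 1 the map Φ is injective. -/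
/-!
Both components of `Φ(c, s)` are multiples of `φ s` by powers of `c` whose exponents differ by
`l`, so `Φ(c, s) = Φ(c', s')` forces `c^l • φ s' = c'^l • φ s'`, hence `c^l = c'^l`, and then
`φ s = φ s'`. For the immersion property, the two components of `dΦ(c, s)(v, w) = 0`, multiplied by
`c / c^k` for `k = ml` and `k = (m+1)l`, read `c • dφ(w) + (k v) • φ s = 0`; since the two values
of `k` differ, subtracting gives `v = 0` (as `φ s ≠ 0`), and then `w = 0` by injectivity of `dφ`.
-/

section Algebra

variable {𝕜 V : Type*} [Field 𝕜] [AddCommGroup V] [Module 𝕜 V]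

theorem pow_mul_smul_eq_and_pow_succ_mul_smul_eq_iff {m l : ℕ} {c c' : 𝕜} (hc' : c' ≠ 0)
    {x x' : V} (hx' : x' ≠ 0) :
    (c ^ (m * l) • x = c' ^ (m * l) • x' ∧ c ^ ((m + 1) * l) • x = c' ^ ((m + 1) * l) • x') ↔
      x = x' ∧ c ^ l = c' ^ l := by
  have pow_mul_eq (k : ℕ) (h : c ^ l = c' ^ l) : c ^ (k * l) = c' ^ (k * l) := by
    rw [pow_mul', pow_mul', h]
  constructor
  · rintro ⟨h₁, h₂⟩
    have pow_succ_mul (d : 𝕜) : d ^ ((m + 1) * l) = d ^ l * d ^ (m * l) := by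
      rw [add_one_mul, pow_add, mul_comm]
    have h₃ : (c ^ l * c' ^ (m * l)) • x' = (c' ^ l * c' ^ (m * l)) • x' := by
      rw [mul_smul, ← h₁, smul_smul, ← pow_succ_mul, h₂, pow_succ_mul]
    have hl : c ^ l = c' ^ l :=
      mul_right_cancel₀ (pow_ne_zero _ hc') (smul_left_injective 𝕜 hx' h₃)
    rw [pow_mul_eq m hl] at h₁
    exact ⟨smul_right_injective V (pow_ne_zero _ hc') h₁, hl⟩
  · rintro ⟨rfl, hl⟩
    rw [pow_mul_eq m hl, pow_mul_eq (m + 1) hl]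
    exact ⟨rfl, rfl⟩

theorem smul_add_natCast_mul_smul_eq_zero {c v : 𝕜} (hc : c ≠ 0) {k : ℕ} {x y : V}
    (h : c ^ k • y + (k * c ^ (k - 1) * v) • x = 0) : c • y + (k * v) • x = 0 := by
  have key : c ^ k • (c • y + (k * v) • x) = c • (c ^ k • y + (k * c ^ (k - 1) * v) • x) := by
    rcases k with _ | k
    · simp
    · simp only [smul_add, smul_smul, add_tsub_cancel_right]
      congr 2 <;> ring
  rw [h, smul_zero] at key
  exact (smul_eq_zero.1 key).resolve_left (pow_ne_zero _ hc)

theorem eq_zero_of_pow_smul_add_natCast_mul_smul_eq_zero [CharZero 𝕜] {c v : 𝕜} (hc : c ≠ 0)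
    {a b : ℕ} (hab : a ≠ b) {x y : V} (hx : x ≠ 0)
    (ha : c ^ a • y + (a * c ^ (a - 1) * v) • x = 0)
    (hb : c ^ b • y + (b * c ^ (b - 1) * v) • x = 0) : v = 0 ∧ y = 0 := by
  have ha' := smul_add_natCast_mul_smul_eq_zero hc ha
  have hb' := smul_add_natCast_mul_smul_eq_zero hc hb
  have hdiff : (((a : 𝕜) - b) * v) • x = 0 := by
    linear_combination (norm := module) ha' - hb'
  have hv : v = 0 := by
    simpa [sub_eq_zero, hx, hab] using hdiff
  subst hv
  simpa [hc] using ha'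

end Algebra

section Immersion

variable {𝕜 E V : Type*} [NontriviallyNormedField 𝕜] [NormedAddCommGroup E] [NormedSpace 𝕜 E]
  [NormedAddCommGroup V] [NormedSpace 𝕜 V]

theorem HasFDerivAt.fst_pow_smul_comp_snd {f : E → V} {f' : E →L[𝕜] V} {s : E}
    (hf : HasFDerivAt f f' s) (k : ℕ) (c : 𝕜) :
    HasFDerivAt (fun p : 𝕜 × E => p.1 ^ k • f p.2)
      (c ^ k • f'.comp (.snd 𝕜 𝕜 E) +
        (((k : 𝕜) * c ^ (k - 1)) • ContinuousLinearMap.fst 𝕜 𝕜 E).smulRight (f s)) (c, s) :=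
  ((hasDerivAt_pow k c).comp_hasFDerivAt (c, s) hasFDerivAt_fst).smul
    (hf.comp (c, s) hasFDerivAt_snd)

theorem injective_fderiv_fst_pow_smul_comp_snd_prod [CharZero 𝕜] {f : E → V} {s : E}
    (hf : DifferentiableAt 𝕜 f s) (hf' : Function.Injective (fderiv 𝕜 f s)) (hfs : f s ≠ 0)
    {c : 𝕜} (hc : c ≠ 0) {a b : ℕ} (hab : a ≠ b) :
    Function.Injective
      (fderiv 𝕜 (fun p : 𝕜 × E => (p.1 ^ a • f p.2, p.1 ^ b • f p.2)) (c, s)) := by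
  rw [((hf.hasFDerivAt.fst_pow_smul_comp_snd a c).prodMk
    (hf.hasFDerivAt.fst_pow_smul_comp_snd b c)).fderiv]
  refine (injective_iff_map_eq_zero _).2 ?_
  rintro ⟨v, w⟩ h
  simp only [ContinuousLinearMap.prod_apply, add_apply, smul_apply, ContinuousLinearMap.comp_apply,
    ContinuousLinearMap.coe_snd', ContinuousLinearMap.smulRight_apply,
    ContinuousLinearMap.coe_fst', smul_eq_mul, Prod.mk_eq_zero] at h
  obtain ⟨rfl, hw⟩ := eq_zero_of_pow_smul_add_natCast_mul_smul_eq_zero hc hab hfs h.1 h.2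
  rw [(injective_iff_map_eq_zero _).1 hf' w hw, Prod.mk_zero_zero]

end Immersion

/-- Let `φ : S → V` be an injective, nowhere vanishing holomorphic immersion of an open
set `S ⊆ ℂⁿ` into a complex normed space `V`, and for `m ≥ 0`, `l ≥ 1` let
`Φ(c,s) := (c^(ml) • φ s, c^((m+1)l) • φ s)` on `ℂˣ × S`.  Then `Φ` is a holomorphic
immersion, `Φ(c,s) = Φ(c',s')` iff `s = s'` and `c^l = c'^l`; in particular for `l = 1`
the map `Φ` is injective. -/
theorem weighted_immersion
    {V : Type*} [NormedAddCommGroup V] [NormedSpace ℂ V]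
    {n : ℕ} (S : Set (Fin n → ℂ)) (hS : IsOpen S)
    (φ : (Fin n → ℂ) → V)
    (hφ : DifferentiableOn ℂ φ S)
    (hφinj : Set.InjOn φ S)
    (hφne : ∀ s ∈ S, φ s ≠ 0)
    (hφimm : ∀ s ∈ S, Function.Injective (fderiv ℂ φ s))
    (m l : ℕ) (hl : 1 ≤ l)
    (Φ : ℂ × (Fin n → ℂ) → V × V)
    (hΦ : Φ = fun p => (p.1 ^ (m * l) • φ p.2, p.1 ^ ((m + 1) * l) • φ p.2)) :
    (DifferentiableOn ℂ Φ ({c : ℂ | c ≠ 0} ×ˢ S) ∧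
      ∀ p ∈ ({c : ℂ | c ≠ 0} ×ˢ S : Set (ℂ × (Fin n → ℂ))),
        Function.Injective (fderiv ℂ Φ p)) ∧
    (∀ c c' : ℂ, c ≠ 0 → c' ≠ 0 → ∀ s ∈ S, ∀ s' ∈ S,
      (Φ (c, s) = Φ (c', s') ↔ s = s' ∧ c ^ l = c' ^ l)) ∧
    (l = 1 → Set.InjOn Φ ({c : ℂ | c ≠ 0} ×ˢ S)) := by
  subst hΦ
  have fibre : ∀ c c' : ℂ, c ≠ 0 → c' ≠ 0 → ∀ s ∈ S, ∀ s' ∈ S,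
      ((c ^ (m * l) • φ s, c ^ ((m + 1) * l) • φ s) =
          (c' ^ (m * l) • φ s', c' ^ ((m + 1) * l) • φ s') ↔ s = s' ∧ c ^ l = c' ^ l) := by
    intro c c' _ hc' s hs s' hs'
    rw [Prod.mk.injEq, pow_mul_smul_eq_and_pow_succ_mul_smul_eq_iff hc' (hφne s' hs'),
      hφinj.eq_iff hs hs']
  refine ⟨⟨?_, ?_⟩, fibre, ?_⟩
  · have hφ_snd : DifferentiableOn ℂ (fun p : ℂ × (Fin n → ℂ) => φ p.2) ({c : ℂ | c ≠ 0} ×ˢ S) :=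
      hφ.comp differentiable_snd.differentiableOn fun _ hp => hp.2
    exact ((differentiable_fst.pow _).differentiableOn.smul hφ_snd).prodMk
      ((differentiable_fst.pow _).differentiableOn.smul hφ_snd)
  · rintro ⟨c, s⟩ ⟨hc, hs⟩
    have hab : m * l ≠ (m + 1) * l := by rw [add_one_mul]; omega
    exact injective_fderiv_fst_pow_smul_comp_snd_prod (hφ.differentiableAt (hS.mem_nhds hs))
      (hφimm s hs) (hφne s hs) hc hab
  · rintro rfl ⟨c, s⟩ ⟨hc, hs⟩ ⟨c', s'⟩ ⟨hc', hs'⟩ h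
    obtain ⟨rfl, hcc⟩ := (fibre c c' hc hc' s hs s' hs').1 h
    rw [pow_one, pow_one] at hcc
    rw [hcc]
end

section
/- Fix positive integers d₁, …, d_m and a point v ∈ ℂᵐ ∖ {0}. Then the orbit map f : ℂˣ → ℂᵐ ∖ {0}, f(c) := (c^{d₁} v₁, …, c^{d_m} v_m), is a proper map; in particular, its range (the orbit of v under the weighted ℂˣ-action) is a closed subset of ℂᵐ ∖ {0}. -/
/-- The weighted action of `ℂˣ` on `ℂᵐ` given by positive weights `d₁, …, d_m`. -/
def weightedAct {m : ℕ} (d : Fin m → ℕ) (c : ℂ) (z : Fin m → ℂ) : Fin m → ℂ :=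
  fun i => c ^ d i * z i

/-- For positive weights `d₁, …, d_m` and `v ∈ ℂᵐ ∖ {0}`, the orbit map
`c ↦ (c^(d i) * v i)_i` from `ℂˣ` to `ℂᵐ ∖ {0}` is proper; in particular its range
(the orbit of `v`) is closed in `ℂᵐ ∖ {0}`. -/
theorem weighted_orbit_map_proper
    {m : ℕ} (d : Fin m → ℕ) (hd : ∀ i, 0 < d i)
    (v : Fin m → ℂ) (hv : v ≠ 0)
    (f : {c : ℂ // c ≠ 0} → {z : Fin m → ℂ // z ≠ 0})
    (hf : ∀ c, (f c : Fin m → ℂ) = weightedAct d c.1 v) :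
    IsProperMap f ∧ IsClosed (Set.range f) := by
  have hopen : IsOpen {z : Fin m → ℂ | z ≠ 0} := isOpen_ne
  haveI : LocallyCompactSpace {z : Fin m → ℂ // z ≠ 0} := hopen.locallyCompactSpace
  have hcont : Continuous f := by
    rw [continuous_induced_rng]
    have : (Subtype.val ∘ f) = fun c : {c : ℂ // c ≠ 0} => weightedAct d c.1 v := by
      funext c; exact hf c
    rw [this]
    exact continuous_pi fun i => ((continuous_subtype_val.pow _).mul continuous_const)
  obtain ⟨i₀, hi₀⟩ : ∃ i, v i ≠ 0 := Function.ne_iff.mp hv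
  have hvnorm : 0 < ‖v‖ := norm_pos_iff.mpr hv
  have hproper : IsProperMap f := by
    rw [isProperMap_iff_isCompact_preimage]
    refine ⟨hcont, fun K hK => ?_⟩
    rcases K.eq_empty_or_nonempty with rfl | hKne
    · simp
    have hKim : IsCompact (Subtype.val '' K) := hK.image continuous_subtype_val
    -- lower bound ε on norms in K
    obtain ⟨z0, hz0, hmin'⟩ := hKim.exists_isMinOn (hKne.image _)
      (continuous_norm.continuousOn : ContinuousOn (fun z : Fin m → ℂ => ‖z‖) _)
    have hmin : ∀ z ∈ Subtype.val '' K, ‖z0‖ ≤ ‖z‖ := fun z hz => hmin' hz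
    set ε := ‖z0‖ with hε
    have hεpos : 0 < ε := by
      obtain ⟨⟨z, hz⟩, _, rfl⟩ := hz0
      exact norm_pos_iff.mpr hz
    -- upper bound M
    obtain ⟨M, hM⟩ := hKim.isBounded.exists_norm_le
    set R := max 1 (M / ‖v i₀‖) with hR
    set r := min 1 (ε / ‖v‖) with hr
    have hrpos : 0 < r := lt_min one_pos (div_pos hεpos hvnorm)
    have hA : IsCompact {c : ℂ | r ≤ ‖c‖ ∧ ‖c‖ ≤ R} := by
      have : {c : ℂ | r ≤ ‖c‖ ∧ ‖c‖ ≤ R} = Metric.closedBall 0 R ∩ {c | r ≤ ‖c‖} := by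
        ext c; simp [Metric.mem_closedBall, dist_zero_right, and_comm]
      rw [this]
      exact (isCompact_closedBall 0 R).inter_right
        (isClosed_le continuous_const continuous_norm)
    have hS : IsCompact (Subtype.val ⁻¹' {c : ℂ | r ≤ ‖c‖ ∧ ‖c‖ ≤ R} :
        Set {c : ℂ // c ≠ 0}) := by
      rw [Topology.IsEmbedding.subtypeVal.isCompact_iff]
      have : Subtype.val '' (Subtype.val ⁻¹' {c : ℂ | r ≤ ‖c‖ ∧ ‖c‖ ≤ R} :
          Set {c : ℂ // c ≠ 0}) = {c : ℂ | r ≤ ‖c‖ ∧ ‖c‖ ≤ R} := by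
        ext c
        simp only [Set.mem_image, Set.mem_preimage, Set.mem_setOf_eq]
        constructor
        · rintro ⟨x, h, rfl⟩; exact h
        · intro h
          refine ⟨⟨c, fun hc0 => ?_⟩, h, rfl⟩
          rw [hc0] at h
          simp only [norm_zero] at h
          linarith [h.1, hrpos]
      rw [this]
      exact hA
    apply hS.of_isClosed_subset (hK.isClosed.preimage hcont)
    intro c hc
    have hfc : (f c : Fin m → ℂ) ∈ Subtype.val '' K := Set.mem_image_of_mem _ hc
    have hnormle : ‖(f c : Fin m → ℂ)‖ ≤ M := hM _ hfc
    have hnormge : ε ≤ ‖(f c : Fin m → ℂ)‖ := hmin _ hfc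
    have hcoord : ∀ i, ‖(f c : Fin m → ℂ) i‖ = ‖c.1‖ ^ d i * ‖v i‖ := by
      intro i; rw [hf]; simp [weightedAct, norm_mul, norm_pow]
    constructor
    · -- lower bound
      by_cases h1 : 1 ≤ ‖c.1‖
      · exact le_trans (min_le_left _ _) h1
      push_neg at h1
      have hle : ‖(f c : Fin m → ℂ)‖ ≤ ‖c.1‖ * ‖v‖ := by
        apply pi_norm_le_iff_of_nonneg (by positivity) |>.mpr
        intro i
        rw [hcoord i]
        calc ‖c.1‖ ^ d i * ‖v i‖ ≤ ‖c.1‖ ^ 1 * ‖v i‖ :=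
              mul_le_mul_of_nonneg_right
                (pow_le_pow_of_le_one (norm_nonneg _) h1.le (hd i)) (norm_nonneg _)
          _ = ‖c.1‖ * ‖v i‖ := by ring
          _ ≤ ‖c.1‖ * ‖v‖ := by gcongr; exact norm_le_pi_norm v i
      have : ε / ‖v‖ ≤ ‖c.1‖ := by
        rw [div_le_iff₀ hvnorm]
        exact hnormge.trans hle
      exact le_trans (min_le_right _ _) this
    · -- upper bound
      have hkey : ‖c.1‖ ^ d i₀ * ‖v i₀‖ ≤ M := by
        rw [← hcoord i₀]
        exact (norm_le_pi_norm _ i₀).trans hnormle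
      have hvi₀ : 0 < ‖v i₀‖ := norm_pos_iff.mpr hi₀
      have hpow : ‖c.1‖ ^ d i₀ ≤ M / ‖v i₀‖ := by
        rw [le_div_iff₀ hvi₀]; exact hkey
      by_cases h1 : ‖c.1‖ ≤ 1
      · exact le_trans h1 (le_max_left _ _)
      push_neg at h1
      have : ‖c.1‖ ≤ ‖c.1‖ ^ d i₀ := le_self_pow₀ h1.le (hd i₀).ne'
      exact le_trans (this.trans hpow) (le_max_right _ _)
  exact ⟨hproper, hproper.isClosedMap.isClosed_range⟩
end
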